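/- If G is a 3-regular simple graph admitting a proper 3-edge-coloring (a coloring of its edges with 3 colors such that edges sharing an endpoint receive different colors), then the graph obtained from G by adding three new vertices, pairwise nonadjacent and each adjacent to every vertex of G, is triangle decomposable. -/
import Mathlib


/-- A triangle on three distinct vertices, as a multiset of edges. -/
def IsTriangle {V : Type*} (t : Multiset (Sym2 V)) : Prop :=
  ∃ a b c : V, a ≠ b ∧ b ≠ c ∧ a ≠ c ∧ t = {s(a, b), s(b, c), s(a, c)}

/-- A multigraph (multiset of edges) is triangle decomposable if it is a sum of triangles. -/
def TriDecomp {V : Type*} (E : Multiset (Sym2 V)) : Prop :=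
  ∃ T : Multiset (Multiset (Sym2 V)), (∀ t ∈ T, IsTriangle t) ∧ T.sum = E

/-- The edge multiset of a simple graph on a finite vertex type. -/
noncomputable def edgeMS {V : Type*} [Fintype V] (G : SimpleGraph V) : Multiset (Sym2 V) :=
  G.edgeSet.toFinite.toFinset.val

/-- `ε_Δ(G)`: the least number of duplicated edges of `G` (a multiset of edges of `G`,
repetitions allowed) whose addition makes the edge multiset triangle decomposable. -/
noncomputable def epsDelta {V : Type*} [Fintype V] (G : SimpleGraph V) : ℕ :=
  sInf {k | ∃ D : Multiset (Sym2 V), D.card = k ∧ (∀ e ∈ D, e ∈ G.edgeSet) ∧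
    TriDecomp (edgeMS G + D)}

/-- The graph obtained from `G` by adding three new, pairwise nonadjacent vertices
(the `Sum.inr` vertices), each adjacent to every vertex of `G`. -/
def tripleJoin {V : Type*} (G : SimpleGraph V) : SimpleGraph (V ⊕ Fin 3) :=
  SimpleGraph.fromEdgeSet
    ({e | ∃ x y : V, G.Adj x y ∧ e = s(Sum.inl x, Sum.inl y)} ∪
     {e | ∃ (x : V) (j : Fin 3), e = s(Sum.inl x, Sum.inr j)})

/-- Cross edges of the triangle associated to an edge with coloring `f`. -/
noncomputable def crossOf {V : Type*} (f : Sym2 V → Fin 3) :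
    Sym2 V → Multiset (Sym2 (V ⊕ Fin 3)) :=
  Sym2.lift ⟨fun a b =>
    {s(Sum.inl a, Sum.inr (f s(a, b))), s(Sum.inl b, Sum.inr (f s(a, b)))}, by
      intro a b
      dsimp only
      have h : f s(b, a) = f s(a, b) := by rw [Sym2.eq_swap]
      rw [h]
      exact Multiset.cons_swap _ _ _⟩

lemma crossOf_mk {V : Type*} (f : Sym2 V → Fin 3) (a b : V) :
    crossOf f s(a, b) =
      {s(Sum.inl a, Sum.inr (f s(a, b))), s(Sum.inl b, Sum.inr (f s(a, b)))} := rfl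

/-- The triangle associated to an edge with coloring `f`. -/
noncomputable def triOf {V : Type*} (f : Sym2 V → Fin 3) (e : Sym2 V) :
    Multiset (Sym2 (V ⊕ Fin 3)) :=
  Sym2.map Sum.inl e ::ₘ crossOf f e

lemma sum_map_indicator {α : Type*} (P : α → Prop) [DecidablePred P] (s : Multiset α) :
    (s.map (fun a => if P a then (1 : ℕ) else 0)).sum = Multiset.card (s.filter P) := by
  induction s using Multiset.induction with
  | empty => simp
  | cons a s ih =>
    by_cases h : P a <;> simp [h, ih, Nat.add_comm]

lemma mem_sum_map {α β : Type*} {s : Multiset α} {g : α → Multiset β} {b : β} :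
    b ∈ (s.map g).sum ↔ ∃ a ∈ s, b ∈ g a := by
  induction s using Multiset.induction with
  | empty => simp
  | cons a s ih => simp [ih]

/-- If `G` is a 3-regular simple graph admitting a proper 3-edge-coloring, then the graph
obtained from `G` by adding three pairwise nonadjacent vertices, each adjacent to every
vertex of `G`, is triangle decomposable. -/
theorem tripleJoin_triDecomp {V : Type*} [Fintype V] (G : SimpleGraph V)
    (hreg : ∀ v, (G.neighborSet v).ncard = 3)
    (f : Sym2 V → Fin 3)
    (hf : ∀ a b c : V, G.Adj a b → G.Adj a c → b ≠ c → f s(a, b) ≠ f s(a, c)) :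
    TriDecomp (edgeMS (tripleJoin G)) := by
  classical
  set E : Multiset (Sym2 V) := edgeMS G with hE
  have hEnodup : E.Nodup := G.edgeSet.toFinite.toFinset.nodup
  have hEmem : ∀ e, e ∈ E ↔ e ∈ G.edgeSet := fun e => Set.Finite.mem_toFinset _
  -- the unique neighbor with given color
  have huniq : ∀ (x : V) (j : Fin 3), ∃! y, G.Adj x y ∧ f s(x, y) = j := by
    intro x j
    have hinj : Set.InjOn (fun y => f s(x, y)) (G.neighborSet x) := by
      intro y hy z hz hyz
      by_contra hne
      exact hf x y z hy hz hne hyz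
    have himg : (fun y => f s(x, y)) '' (G.neighborSet x) = Set.univ := by
      apply Set.eq_of_subset_of_ncard_le (Set.subset_univ _)
      rw [Set.ncard_image_of_injOn hinj, hreg, Set.ncard_univ]
      simp
    have hj : j ∈ (fun y => f s(x, y)) '' (G.neighborSet x) := by
      rw [himg]; trivial
    obtain ⟨y, hy, hfy⟩ := hj
    refine ⟨y, ⟨hy, hfy⟩, ?_⟩
    rintro z ⟨hz, hfz⟩
    exact hinj hz hy (hfz.trans hfy.symm)
  -- the pieces
  set A : Multiset (Sym2 (V ⊕ Fin 3)) := E.map (Sym2.map Sum.inl) with hA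
  set B : Multiset (Sym2 (V ⊕ Fin 3)) :=
    ((Finset.univ : Finset (V × Fin 3)).val).map (fun p => s(Sum.inl p.1, Sum.inr p.2)) with hB
  set B' : Multiset (Sym2 (V ⊕ Fin 3)) := (E.map (crossOf f)).sum with hB'
  have hBinj : Function.Injective (fun p : V × Fin 3 => s(Sum.inl p.1, Sum.inr p.2)) := by
    rintro ⟨a, b⟩ ⟨c, d⟩ h
    simp only [Sym2.eq_iff] at h
    rcases h with ⟨h1, h2⟩ | ⟨h1, h2⟩
    · simp_all
    · exact absurd h1 (by simp)
  have hBnodup : B.Nodup := Multiset.Nodup.map hBinj (Finset.univ.nodup)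
  have hAnodup : A.Nodup := hEnodup.map (Sym2.map.injective Sum.inl_injective)
  -- count of crossOf
  have hcount : ∀ (x : V) (j : Fin 3), ∀ e ∈ G.edgeSet,
      Multiset.count s(Sum.inl x, Sum.inr j) (crossOf f e) =
        if x ∈ e ∧ f e = j then 1 else 0 := by
    intro x j e he
    induction e using Sym2.ind with
    | _ a b =>
      have hab : a ≠ b := ((SimpleGraph.mem_edgeSet _).mp he).ne
      rw [crossOf_mk]
      have h1 : (s(Sum.inl x, Sum.inr j) = s(Sum.inl a, Sum.inr (f s(a,b)))) ↔
          (x = a ∧ f s(a,b) = j) := by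
        rw [Sym2.eq_iff]
        constructor
        · rintro (⟨ha, hb⟩ | ⟨ha, hb⟩)
          · exact ⟨Sum.inl_injective ha, (Sum.inr_injective hb).symm⟩
          · exact absurd ha (by simp)
        · rintro ⟨rfl, rfl⟩; left; exact ⟨rfl, rfl⟩
      have h2 : (s(Sum.inl x, Sum.inr j) = s(Sum.inl b, Sum.inr (f s(a,b)))) ↔
          (x = b ∧ f s(a,b) = j) := by
        rw [Sym2.eq_iff]
        constructor
        · rintro (⟨ha, hb⟩ | ⟨ha, hb⟩)
          · exact ⟨Sum.inl_injective ha, (Sum.inr_injective hb).symm⟩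
          · exact absurd ha (by simp)
        · rintro ⟨rfl, rfl⟩; left; exact ⟨rfl, rfl⟩
      have hmem : x ∈ s(a, b) ↔ x = a ∨ x = b := Sym2.mem_iff
      show Multiset.count _ (_ ::ₘ {_}) = _
      rw [Multiset.count_cons, Multiset.count_singleton]
      by_cases hj : f s(a, b) = j
      · by_cases hxa : x = a
        · subst hxa
          simp [h1, h2, hj, hab, Ne.symm hab, hmem]
        · by_cases hxb : x = b
          · subst hxb
            simp [h1, h2, hj, hxa, hmem]
          · simp [h1, h2, hxa, hxb, hmem]
      · simp [h1, h2, hj, hmem]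
  -- count of B' at a cross edge is 1
  have hB'one : ∀ (x : V) (j : Fin 3),
      Multiset.count s(Sum.inl x, Sum.inr j) B' = 1 := by
    intro x j
    rw [hB', Multiset.count_sum]
    have hmapeq : E.map (fun e => Multiset.count s(Sum.inl x, Sum.inr j) (crossOf f e)) =
        E.map (fun e => if x ∈ e ∧ f e = j then 1 else 0) := by
      apply Multiset.map_congr rfl
      intro e he
      exact hcount x j e ((hEmem e).mp he)
    rw [hmapeq, sum_map_indicator]
    obtain ⟨y, ⟨hadj, hfy⟩, hyu⟩ := huniq x j
    have hfilter : E.filter (fun e => x ∈ e ∧ f e = j) = {s(x, y)} := by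
      rw [Multiset.Nodup.ext (Multiset.Nodup.filter _ hEnodup) (Multiset.nodup_singleton _)]
      intro e
      rw [Multiset.mem_filter, Multiset.mem_singleton, hEmem]
      constructor
      · rintro ⟨heG, hxe, hfe⟩
        induction e using Sym2.ind with
        | _ a b =>
          rcases Sym2.mem_iff.mp hxe with rfl | rfl
          · rw [hyu b ⟨(SimpleGraph.mem_edgeSet _).mp heG, hfe⟩]
          · rw [Sym2.eq_swap]
            have hGa : G.Adj x a := ((SimpleGraph.mem_edgeSet _).mp heG).symm
            rw [hyu a ⟨hGa, by rwa [Sym2.eq_swap]⟩]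
      · rintro rfl
        exact ⟨(SimpleGraph.mem_edgeSet _).mpr hadj, Sym2.mem_mk_left _ _, hfy⟩
    rw [hfilter]
    simp
  -- B' = B
  have hB'B : B' = B := by
    ext b
    induction b using Sym2.ind with
    | _ u v =>
      rcases u with x | i <;> rcases v with y | j
      · -- inl inl : both zero
        have h1 : s(Sum.inl x, Sum.inl y) ∉ B' := by
          intro h
          rw [hB', mem_sum_map] at h
          obtain ⟨e, he, hmem⟩ := h
          induction e using Sym2.ind with
          | _ a b =>
            rw [crossOf_mk] at hmem
            simp [Sym2.eq_iff] at hmem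
        have h2 : s(Sum.inl x, Sum.inl y) ∉ B := by
          intro h
          rw [hB, Multiset.mem_map] at h
          obtain ⟨p, _, h⟩ := h
          simp [Sym2.eq_iff] at h
        rw [Multiset.count_eq_zero_of_notMem h1, Multiset.count_eq_zero_of_notMem h2]
      · -- inl inr : both one
        have hBc : Multiset.count s(Sum.inl x, Sum.inr j) B = 1 := by
          apply Multiset.count_eq_one_of_mem hBnodup
          rw [hB, Multiset.mem_map]
          exact ⟨(x, j), Finset.mem_univ _, rfl⟩
        rw [hBc, hB'one]
      · -- inr inl : swap then as above
        rw [Sym2.eq_swap]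
        have hBc : Multiset.count s(Sum.inl y, Sum.inr i) B = 1 := by
          apply Multiset.count_eq_one_of_mem hBnodup
          rw [hB, Multiset.mem_map]
          exact ⟨(y, i), Finset.mem_univ _, rfl⟩
        rw [hBc, hB'one]
      · -- inr inr : both zero
        have h1 : s(Sum.inr i, Sum.inr j) ∉ B' := by
          intro h
          rw [hB', mem_sum_map] at h
          obtain ⟨e, he, hmem⟩ := h
          induction e using Sym2.ind with
          | _ a b =>
            rw [crossOf_mk] at hmem
            simp [Sym2.eq_iff] at hmem
        have h2 : s(Sum.inr i, Sum.inr j) ∉ B := by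
          intro h
          rw [hB, Multiset.mem_map] at h
          obtain ⟨p, _, h⟩ := h
          simp [Sym2.eq_iff] at h
        rw [Multiset.count_eq_zero_of_notMem h1, Multiset.count_eq_zero_of_notMem h2]
  -- edgeMS (tripleJoin G) = A + B
  have hTJnodup : (edgeMS (tripleJoin G)).Nodup := (tripleJoin G).edgeSet.toFinite.toFinset.nodup
  have hTJmem : ∀ e, e ∈ edgeMS (tripleJoin G) ↔ e ∈ (tripleJoin G).edgeSet :=
    fun e => Set.Finite.mem_toFinset _
  have hdisj : Disjoint A B := by
    rw [Multiset.disjoint_left]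
    intro e heA heB
    rw [hA, Multiset.mem_map] at heA
    rw [hB, Multiset.mem_map] at heB
    obtain ⟨e', _, rfl⟩ := heA
    obtain ⟨p, _, hp⟩ := heB
    induction e' using Sym2.ind with
    | _ a b =>
      rw [Sym2.map_pair_eq] at hp
      simp [Sym2.eq_iff] at hp
  have hABnodup : (A + B).Nodup := Multiset.nodup_add.mpr ⟨hAnodup, hBnodup, hdisj⟩
  have hEdge : edgeMS (tripleJoin G) = A + B := by
    rw [Multiset.Nodup.ext hTJnodup hABnodup]
    intro e
    rw [hTJmem, Multiset.mem_add]
    unfold tripleJoin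
    rw [SimpleGraph.edgeSet_fromEdgeSet, Set.mem_diff, Set.mem_union]
    constructor
    · rintro ⟨h | h, _⟩
      · obtain ⟨x, y, hxy, rfl⟩ := h
        left
        rw [hA, Multiset.mem_map]
        exact ⟨s(x, y), (hEmem _).mpr ((SimpleGraph.mem_edgeSet _).mpr hxy),
          Sym2.map_pair_eq _ _ _⟩
      · obtain ⟨x, j, rfl⟩ := h
        right
        rw [hB, Multiset.mem_map]
        exact ⟨(x, j), Finset.mem_univ _, rfl⟩
    · intro h
      rcases h with h | h
      · rw [hA, Multiset.mem_map] at h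
        obtain ⟨e', he', rfl⟩ := h
        have he'G := (hEmem e').mp he'
        induction e' using Sym2.ind with
        | _ a b =>
          have hadj : G.Adj a b := (SimpleGraph.mem_edgeSet _).mp he'G
          refine ⟨Or.inl ⟨a, b, hadj, (Sym2.map_pair_eq _ _ _).symm⟩, ?_⟩
          rw [Sym2.map_pair_eq]
          intro hcon
          exact hadj.ne (Sum.inl_injective hcon)
      · rw [hB, Multiset.mem_map] at h
        obtain ⟨⟨x, j⟩, _, rfl⟩ := h
        simp only [Set.mem_setOf_eq, Sym2.isDiag_iff_proj_eq]
        exact ⟨Or.inr ⟨x, j, rfl⟩, by simp⟩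
  -- assemble
  refine ⟨E.map (triOf f), ?_, ?_⟩
  · intro t ht
    rw [Multiset.mem_map] at ht
    obtain ⟨e, he, rfl⟩ := ht
    have heG := (hEmem e).mp he
    induction e using Sym2.ind with
    | _ a b =>
      have hadj : G.Adj a b := (SimpleGraph.mem_edgeSet _).mp heG
      refine ⟨Sum.inl a, Sum.inl b, Sum.inr (f s(a, b)), by simp [hadj.ne], by simp,
        by simp, ?_⟩
      unfold triOf
      rw [crossOf_mk, Sym2.map_pair_eq]
      exact congrArg (Multiset.cons _) (Multiset.cons_swap _ _ _)
  · have hmap : E.map (triOf f) = E.map (fun e => {Sym2.map Sum.inl e} + crossOf f e) := by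
      apply Multiset.map_congr rfl
      intro e _
      rfl
    have h2 : E.map (fun e => ({Sym2.map Sum.inl e} : Multiset (Sym2 (V ⊕ Fin 3)))) =
        (E.map (Sym2.map Sum.inl)).map (fun a => {a}) := by
      rw [Multiset.map_map]; rfl
    rw [hmap, Multiset.sum_map_add, hEdge, h2, Multiset.sum_map_singleton, ← hB', hB'B]
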